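/- arXiv:2307.08322 — 2 statements merged into one kernel-verified Lean document; each statement's English description precedes it below -/
import Mathlib

section
/- Let d ≥ 1, m ≥ 1, T ∈ (0,∞), 1 < p ≤ 3 and 0 < α ≤ 1. Let v : (0,T) × ℝ^d → ℝ^m be measurable with E := ess sup_{t∈(0,T)} ‖v(t,·)‖_{L²(ℝ^d)} < ∞, and suppose that lim_{z→0} |z|^{−α} ‖v(·,·+z) − v‖_{L^p(0,T;L^{2p/(p-1)}(ℝ^d))} = 0, the mixed norm being finite for each z ≠ 0. Then lim_{z→0} |z|^{−pα/3} ‖v(·,·+z) − v‖_{L³(0,T;L³(ℝ^d))} = 0. -/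
/-!
For each time, Hölder's inequality interpolates `L³` between `L²` and `L^{2p/(p-1)}`:
`‖w‖₃³ ≤ ‖w‖₂^{3-p} ‖w‖_{2p/(p-1)}^p`. Applied to the increment `w = v(·+z) - v`, whose `L²` norm
is at most twice the `L^∞_t L²_x` bound of `v`, and integrated over `(0,T)`, this gives
`‖v(·+z) - v‖_{L³L³} ≤ C ‖v(·+z) - v‖_{L^p L^{2p/(p-1)}}^{p/3}`; multiplying by
`|z|^{-pα/3} = (|z|^{-α})^{p/3}` transfers the vanishing limit.
-/

open MeasureTheory ENNReal Filter

/-- The mixed norm `‖v‖_{L^p(0,T;L^q(ℝ^d))} = (∫_0^T ‖v(t,·)‖_{L^q}^p dt)^{1/p}`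
(for finite exponents `p, q`). -/
noncomputable def mixedNorm (d m : ℕ) (T p q : ℝ)
    (v : ℝ → EuclideanSpace ℝ (Fin d) → EuclideanSpace ℝ (Fin m)) : ℝ≥0∞ :=
  (∫⁻ t in Set.Ioo 0 T, (eLpNorm (v t) (ENNReal.ofReal q) volume) ^ p) ^ (1 / p)

section Interpolation

variable {X E : Type*} [MeasurableSpace X] {μ : Measure X} [NormedAddCommGroup E]

theorem eLpNorm_ofReal_rpow_eq_lintegral {f : X → E} {r : ℝ} (hr : 0 < r) :
    eLpNorm f (ENNReal.ofReal r) μ ^ r = ∫⁻ x, ‖f x‖ₑ ^ r ∂μ := by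
  rw [eLpNorm_eq_eLpNorm' (by simpa using hr) ofReal_ne_top, toReal_ofReal hr.le,
    lintegral_rpow_enorm_eq_rpow_eLpNorm' hr]

theorem lintegral_rpow_add_le_mul {g : X → ℝ≥0∞} (hg : AEMeasurable g μ) {a b s t : ℝ}
    (ha : 0 ≤ a) (hb : 0 ≤ b) (hst : s.HolderConjugate t) :
    ∫⁻ x, g x ^ (a + b) ∂μ ≤
      (∫⁻ x, g x ^ (a * s) ∂μ) ^ (1 / s) * (∫⁻ x, g x ^ (b * t) ∂μ) ^ (1 / t) := by
  simp only [rpow_add_of_nonneg _ _ ha hb, rpow_mul]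
  exact lintegral_mul_le_Lp_mul_Lq μ hst (hg.pow_const a) (hg.pow_const b)

/-- `L³` lies between `L²` and `L^{2p/(p-1)}`: `1/3 = ((3-p)/3)/2 + (p/3)/(2p/(p-1))`. -/
theorem eLpNorm_three_rpow_le {f : X → E} (hf : AEStronglyMeasurable f μ) {p : ℝ}
    (hp1 : 1 < p) (hp3 : p ≤ 3) :
    eLpNorm f (ENNReal.ofReal 3) μ ^ (3 : ℝ) ≤
      eLpNorm f 2 μ ^ (3 - p) * eLpNorm f (ENNReal.ofReal (2 * p / (p - 1))) μ ^ p := by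
  rcases hp3.eq_or_lt with rfl | hp3
  · norm_num
  have hq : 0 < 2 * p / (p - 1) := div_pos (by linarith) (by linarith)
  have hst : (2 / (3 - p)).HolderConjugate (2 / (p - 1)) :=
    ⟨by rw [inv_div, inv_div, inv_one]; ring, div_pos two_pos (by linarith),
      div_pos two_pos (by linarith)⟩
  have key := lintegral_rpow_add_le_mul (μ := μ) hf.enorm (a := 3 - p) (b := p)
    (by linarith) (by linarith) hst
  have hs : (3 - p) * (2 / (3 - p)) = 2 := by field_simp
  have ht : p * (2 / (p - 1)) = 2 * p / (p - 1) := by ring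
  rw [hs, ht, ← eLpNorm_ofReal_rpow_eq_lintegral two_pos,
    ← eLpNorm_ofReal_rpow_eq_lintegral hq, ← rpow_mul, ← rpow_mul, ofReal_ofNat] at key
  rw [eLpNorm_ofReal_rpow_eq_lintegral three_pos]
  convert key using 3
  · norm_num
  · field_simp
  · field_simp [(by linarith : p - 1 ≠ 0)]

end Interpolation

theorem eLpNorm_comp_add_right_sub_le {G E : Type*} [MeasurableSpace G] [AddGroup G]
    [MeasurableAdd G] {μ : Measure G} [μ.IsAddRightInvariant] [NormedAddCommGroup E]
    {f : G → E} (hf : AEStronglyMeasurable f μ) (z : G) {p : ℝ≥0∞} (hp : 1 ≤ p) :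
    eLpNorm (fun x => f (x + z) - f x) p μ ≤ 2 * eLpNorm f p μ := by
  have hshift := measurePreserving_add_right μ z
  calc eLpNorm (fun x => f (x + z) - f x) p μ
      ≤ eLpNorm (f ∘ (· + z)) p μ + eLpNorm f p μ :=
        eLpNorm_sub_le (hf.comp_measurePreserving hshift) hf hp
    _ = 2 * eLpNorm f p μ := by rw [eLpNorm_comp_measurePreserving hf hshift, two_mul]

theorem mixedNorm_three_le {d m : ℕ} {T p : ℝ} (hp1 : 1 < p) (hp3 : p ≤ 3)
    {w : ℝ → EuclideanSpace ℝ (Fin d) → EuclideanSpace ℝ (Fin m)}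
    (hw : ∀ t, AEStronglyMeasurable (w t)) {C : ℝ≥0∞} (hC : C ≠ ⊤)
    (hwC : ∀ᵐ t ∂volume.restrict (Set.Ioo 0 T), eLpNorm (w t) 2 volume ≤ C) :
    mixedNorm d m T 3 3 w ≤
      C ^ ((3 - p) / 3) * mixedNorm d m T p (2 * p / (p - 1)) w ^ (p / 3) := by
  have hpointwise : ∀ᵐ t ∂volume.restrict (Set.Ioo 0 T),
      eLpNorm (w t) (ENNReal.ofReal 3) volume ^ (3 : ℝ) ≤
        C ^ (3 - p) * eLpNorm (w t) (ENNReal.ofReal (2 * p / (p - 1))) volume ^ p := by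
    filter_upwards [hwC] with t ht
    exact (eLpNorm_three_rpow_le (hw t) hp1 hp3).trans
      (mul_le_mul_left (rpow_le_rpow ht (by linarith)) _)
  have hint := lintegral_mono_ae hpointwise
  rw [lintegral_const_mul' _ _ (rpow_ne_top_of_nonneg (by linarith) hC)] at hint
  calc mixedNorm d m T 3 3 w
      ≤ (C ^ (3 - p) * ∫⁻ t in Set.Ioo 0 T,
          eLpNorm (w t) (ENNReal.ofReal (2 * p / (p - 1))) volume ^ p) ^ (1 / (3 : ℝ)) :=
        rpow_le_rpow hint (by norm_num)
    _ = C ^ ((3 - p) / 3) * mixedNorm d m T p (2 * p / (p - 1)) w ^ (p / 3) := by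
      rw [mul_rpow_of_nonneg _ _ (by norm_num), mixedNorm, ← rpow_mul, ← rpow_mul]
      congr 2 <;> field_simp

theorem tendsto_zero_of_le_const_mul_rpow {Z : Type*} {l : Filter Z} {f g : Z → ℝ≥0∞}
    {K : ℝ≥0∞} (hK : K ≠ ⊤) {r : ℝ} (hr : 0 < r) (hfg : ∀ z, f z ≤ K * g z ^ r)
    (hg : Tendsto g l (nhds 0)) : Tendsto f l (nhds 0) :=
  tendsto_of_tendsto_of_tendsto_of_le_of_le tendsto_const_nhds
    ((tendsto_const_mul_rpow_nhds_zero_of_pos hK hr).comp hg) (fun _ => zero_le) hfg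

theorem stmt3_general (d m : ℕ) (T p α : ℝ)
    (hp1 : 1 < p) (hp3 : p ≤ 3)
    (v : ℝ → EuclideanSpace ℝ (Fin d) → EuclideanSpace ℝ (Fin m))
    (hmeas : Measurable (Function.uncurry v))
    (hE : essSup (fun t => eLpNorm (v t) 2 volume) (volume.restrict (Set.Ioo 0 T)) < ⊤)
    (hlim : Tendsto
      (fun z : EuclideanSpace ℝ (Fin d) =>
        ENNReal.ofReal (‖z‖ ^ (-α)) *
          mixedNorm d m T p (2 * p / (p - 1)) (fun t x => v t (x + z) - v t x))
      (nhdsWithin 0 {z | z ≠ 0}) (nhds 0)) :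
    Tendsto
      (fun z : EuclideanSpace ℝ (Fin d) =>
        ENNReal.ofReal (‖z‖ ^ (-(p * α / 3))) *
          mixedNorm d m T 3 3 (fun t x => v t (x + z) - v t x))
      (nhdsWithin 0 {z | z ≠ 0}) (nhds 0) := by
  set E := essSup (fun t => eLpNorm (v t) 2 volume) (volume.restrict (Set.Ioo 0 T))
  have hv : ∀ t, AEStronglyMeasurable (v t) :=
    fun t => (hmeas.comp measurable_prodMk_left).aestronglyMeasurable
  have h2E : 2 * E ≠ ⊤ := mul_ne_top ofNat_ne_top hE.ne
  refine tendsto_zero_of_le_const_mul_rpow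
    (rpow_ne_top_of_nonneg (by linarith : 0 ≤ (3 - p) / 3) h2E)
    (by positivity : 0 < p / 3) (fun z => ?_) hlim
  have hweight : ENNReal.ofReal (‖z‖ ^ (-(p * α / 3))) =
      ENNReal.ofReal (‖z‖ ^ (-α)) ^ (p / 3) := by
    rw [ofReal_rpow_of_nonneg (by positivity) (by positivity), ← Real.rpow_mul (norm_nonneg z)]
    ring_nf
  have hdiff : ∀ᵐ t ∂volume.restrict (Set.Ioo 0 T),
      eLpNorm (fun x => v t (x + z) - v t x) 2 volume ≤ 2 * E := by
    filter_upwards [ae_le_essSup (fun t => eLpNorm (v t) 2 volume)] with t ht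
    exact (eLpNorm_comp_add_right_sub_le (hv t) z one_le_two).trans (by gcongr)
  have hw : ∀ t, AEStronglyMeasurable (fun x => v t (x + z) - v t x) := fun t =>
    ((hv t).comp_measurePreserving (measurePreserving_add_right volume z)).sub (hv t)
  calc _ ≤ ENNReal.ofReal (‖z‖ ^ (-α)) ^ (p / 3) * ((2 * E) ^ ((3 - p) / 3) *
        mixedNorm d m T p (2 * p / (p - 1)) (fun t x => v t (x + z) - v t x) ^ (p / 3)) := by
        rw [hweight]; exact mul_le_mul_right (mixedNorm_three_le hp1 hp3 hw h2E hdiff) _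
    _ = _ := by rw [mul_rpow_of_nonneg (ENNReal.ofReal _) _ (by positivity), mul_left_comm]

/-- **Space–time Besov reduction (Theorems 1.1(1) and 1.3(1)).**
For `d, m ≥ 1`, `T ∈ (0,∞)`, `1 < p ≤ 3`, `0 < α ≤ 1`, and a measurable
`v : (0,T) × ℝ^d → ℝ^m` with `ess sup_{t∈(0,T)} ‖v(t,·)‖_{L²} < ∞`, finite mixed norms
`‖v(·,·+z) − v‖_{L^p(0,T;L^{2p/(p-1)})}` for `z ≠ 0`, and
`|z|^{−α} ‖v(·,·+z) − v‖_{L^p(0,T;L^{2p/(p-1)})} → 0` as `z → 0`, one has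
`|z|^{−pα/3} ‖v(·,·+z) − v‖_{L³(0,T;L³)} → 0` as `z → 0`. -/
theorem stmt3 (d m : ℕ) (hd : 1 ≤ d) (hm : 1 ≤ m) (T p α : ℝ)
    (hT : 0 < T) (hp1 : 1 < p) (hp3 : p ≤ 3) (hα0 : 0 < α) (hα1 : α ≤ 1)
    (v : ℝ → EuclideanSpace ℝ (Fin d) → EuclideanSpace ℝ (Fin m))
    (hmeas : Measurable (Function.uncurry v))
    (hE : essSup (fun t => eLpNorm (v t) 2 volume) (volume.restrict (Set.Ioo 0 T)) < ⊤)
    (hfin : ∀ z : EuclideanSpace ℝ (Fin d), z ≠ 0 →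
      mixedNorm d m T p (2 * p / (p - 1)) (fun t x => v t (x + z) - v t x) < ⊤)
    (hlim : Tendsto
      (fun z : EuclideanSpace ℝ (Fin d) =>
        ENNReal.ofReal (‖z‖ ^ (-α)) *
          mixedNorm d m T p (2 * p / (p - 1)) (fun t x => v t (x + z) - v t x))
      (nhdsWithin 0 {z | z ≠ 0}) (nhds 0)) :
    Tendsto
      (fun z : EuclideanSpace ℝ (Fin d) =>
        ENNReal.ofReal (‖z‖ ^ (-(p * α / 3))) *
          mixedNorm d m T 3 3 (fun t x => v t (x + z) - v t x))
      (nhdsWithin 0 {z | z ≠ 0}) (nhds 0) :=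
  stmt3_general d m T p α hp1 hp3 v hmeas hE hlim
end

section
/- Let d ≥ 1 and let η : ℝ^d → ℝ be continuous, compactly supported, with ∫_{ℝ^d} η(y) dy = 1; for ε > 0 set η_ε(x) = ε^{−d} η(x/ε). Let f, g : ℝ^d → ℝ be continuous and bounded. Then for every x ∈ ℝ^d and every ε > 0: ((fg) ⋆ η_ε)(x) − (f ⋆ η_ε)(x)·(g ⋆ η_ε)(x) = ∫_{ℝ^d} η_ε(y) (f(x−y) − f(x))(g(x−y) − g(x)) dy − (f(x) − (f ⋆ η_ε)(x))·(g(x) − (g ⋆ η_ε)(x)). -/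
open MeasureTheory ENNReal

/-- **Constantin–E–Titi commutator identity (2.4).**
Let `η : ℝ^d → ℝ` be continuous, compactly supported, with `∫ η = 1`, and
`η_ε(x) = ε^{−d} η(x/ε)`. For continuous bounded `f, g : ℝ^d → ℝ`, every `x` and `ε > 0`:
`((fg)⋆η_ε)(x) − (f⋆η_ε)(x)(g⋆η_ε)(x)
  = ∫ η_ε(y)(f(x−y)−f(x))(g(x−y)−g(x)) dy − (f(x)−(f⋆η_ε)(x))(g(x)−(g⋆η_ε)(x))`. -/
theorem stmt4 (d : ℕ) (hd : 1 ≤ d)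
    (η : EuclideanSpace ℝ (Fin d) → ℝ)
    (hη_cont : Continuous η) (hη_supp : HasCompactSupport η)
    (hη_int : ∫ y, η y = 1)
    (f g : EuclideanSpace ℝ (Fin d) → ℝ)
    (hf_cont : Continuous f) (hf_bdd : ∃ C, ∀ x, |f x| ≤ C)
    (hg_cont : Continuous g) (hg_bdd : ∃ C, ∀ x, |g x| ≤ C) :
    ∀ (x : EuclideanSpace ℝ (Fin d)) (ε : ℝ), 0 < ε →
      (∫ y, (ε ^ d)⁻¹ * η (ε⁻¹ • y) * (f (x - y) * g (x - y))) -
          (∫ y, (ε ^ d)⁻¹ * η (ε⁻¹ • y) * f (x - y)) *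
            (∫ y, (ε ^ d)⁻¹ * η (ε⁻¹ • y) * g (x - y)) =
        (∫ y, (ε ^ d)⁻¹ * η (ε⁻¹ • y) * ((f (x - y) - f x) * (g (x - y) - g x))) -
          (f x - ∫ y, (ε ^ d)⁻¹ * η (ε⁻¹ • y) * f (x - y)) *
            (g x - ∫ y, (ε ^ d)⁻¹ * η (ε⁻¹ • y) * g (x - y)) := by
  intro x ε hε
  -- the mollifier
  set φ : EuclideanSpace ℝ (Fin d) → ℝ := fun y => (ε ^ d)⁻¹ * η (ε⁻¹ • y) with hφ
  have hφ_cont : Continuous φ := by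
    exact continuous_const.mul (hη_cont.comp (continuous_const_smul _))
  have hφ_supp : HasCompactSupport φ := by
    have h1 : HasCompactSupport fun y => η (ε⁻¹ • y) :=
      hη_supp.comp_smul (inv_ne_zero hε.ne')
    exact (HasCompactSupport.mul_left h1 : HasCompactSupport fun y => (ε ^ d)⁻¹ * η (ε⁻¹ • y))
  -- integral of the mollifier
  have hφ_int : ∫ y, φ y = 1 := by
    have := MeasureTheory.Measure.integral_comp_inv_smul_of_nonneg
      (volume : Measure (EuclideanSpace ℝ (Fin d))) η hε.le
    simp only [finrank_euclideanSpace, Fintype.card_fin, smul_eq_mul, hη_int, mul_one] at this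
    simp only [hφ, integral_const_mul, this]
    field_simp
  -- integrability of φ times a bounded continuous function
  have key : ∀ h : EuclideanSpace ℝ (Fin d) → ℝ, Continuous h →
      Integrable (fun y => φ y * h (x - y)) := by
    intro h hc
    apply (hφ_cont.mul (hc.comp (continuous_const.sub continuous_id))).integrable_of_hasCompactSupport
    exact hφ_supp.mul_right
  have hA := key f hf_cont
  have hB := key g hg_cont
  have hC := key (fun y => f y * g y) (hf_cont.mul hg_cont)
  have hconst : Integrable (fun y : EuclideanSpace ℝ (Fin d) => φ y) :=
    hφ_cont.integrable_of_hasCompactSupport hφ_supp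
  -- expand the integrand on the right-hand side
  have expand : (∫ y, φ y * ((f (x - y) - f x) * (g (x - y) - g x)))
      = (∫ y, φ y * (f (x - y) * g (x - y))) - f x * (∫ y, φ y * g (x - y))
        - g x * (∫ y, φ y * f (x - y)) + f x * g x := by
    have : (fun y => φ y * ((f (x - y) - f x) * (g (x - y) - g x)))
        = fun y => (φ y * (f (x - y) * g (x - y)) - f x * (φ y * g (x - y)))
            - g x * (φ y * f (x - y)) + (f x * g x) * φ y := by
      funext y; ring
    rw [this, integral_add, integral_sub, integral_sub]
    · rw [integral_const_mul, integral_const_mul, integral_const_mul, hφ_int]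
      ring
    · exact hC
    · exact hB.const_mul _
    · exact hC.sub (hB.const_mul _)
    · exact hA.const_mul _
    · exact (hC.sub (hB.const_mul _)).sub (hA.const_mul _)
    · exact hconst.const_mul _
  simp only [← hφ] at *
  rw [expand]
  ring
end
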